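/- arXiv:1303.4440 — 2 statements merged into one kernel-verified Lean document; each statement's English description precedes it below -/
import Mathlib

section
/- Let G be a distribution function on ℝ whose integrated tail distribution G^s is long-tailed. Then for any g > 0 and any real sequence {α_n} with α_n → α as n → ∞, and for every integer k and every real l, lim_{y→∞} (1/Ḡ^s(y)) Σ_{n=k}^∞ α_n Ḡ(y + l + ng) = α/g. -/
open MeasureTheory ProbabilityTheory Filter Set

noncomputable section

/-- The (upper) tail `H̄(y) = μ((y,∞))` of a (probability) measure on `ℝ`. -/
def mtail (μ : Measure ℝ) (y : ℝ) : ℝ := (μ (Set.Ioi y)).toReal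

/-- The integrated (second-tail) distribution tail `H̄ˢ(y) = min(1, ∫_y^∞ H̄(t) dt)`. -/
def mtailInt (μ : Measure ℝ) (y : ℝ) : ℝ := min 1 (∫ t in Set.Ioi y, mtail μ t)

/-- Convolution of two measures on `ℝ` (the distribution of a sum of independent r.v.s). -/
def mconv (μ ν : Measure ℝ) : Measure ℝ := Measure.map (fun p : ℝ × ℝ => p.1 + p.2) (μ.prod ν)

/-- A distribution on `ℝ₊` is subexponential if its tail is everywhere positive and
`H̄^{*2}(y)/H̄(y) → 2` as `y → ∞`. -/
def Subexp (μ : Measure ℝ) : Prop :=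
  (∀ y, 0 < mtail μ y) ∧
  Tendsto (fun y => mtail (mconv μ μ) y / mtail μ y) atTop (nhds 2)

/-- A tail function `f` is long-tailed if it is everywhere positive and
`f(y+z)/f(y) → 1` as `y → ∞` for every fixed `z > 0`. -/
def LongTailedFun (f : ℝ → ℝ) : Prop :=
  (∀ y, 0 < f y) ∧ ∀ z > 0, Tendsto (fun y => f (y + z) / f y) atTop (nhds 1)

/-- The probability measure on `ℝ` whose distribution function is the integrated-tail
distribution `Hˢ`, i.e. whose tail is `H̄ˢ(y) = min(1, ∫_y^∞ H̄(t) dt)`. -/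
def intTailMeasure (μ : Measure ℝ) : Measure ℝ :=
  (volume.restrict {t : ℝ | ∫ s in Set.Ioi t, mtail μ s < 1}).withDensity
    (fun t => ENNReal.ofReal (mtail μ t))

/-- The integrated-tail distribution `Hˢ` is subexponential. -/
def SubexpIntTail (μ : Measure ℝ) : Prop := Subexp (intTailMeasure μ)

/-- The `n`-th regeneration cycle `Z_n = (τ_n; X_{T_{n-1}+1}, …, X_{T_n})` of a process `X`
with regeneration times `T`, encoded as the cycle length together with the (padded) cycle
path. -/
def cycle {Ω 𝒳 : Type*} (X : ℕ → Ω → 𝒳) (T : ℕ → Ω → ℕ) (n : ℕ) (ω : Ω) :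
    ℕ × (ℕ → 𝒳 ⊕ Unit) :=
  let start : ℕ := if n = 0 then 0 else T (n - 1) ω
  (T n ω - start,
   fun i => if i < T n ω - start then Sum.inl (X (start + 1 + i) ω) else Sum.inr ())

set_option linter.unusedSectionVars false
set_option linter.unusedVariables false

variable (G : Measure ℝ) [IsProbabilityMeasure G]

/-- integrated tail (without the min). -/
def mI (y : ℝ) : ℝ := ∫ t in Set.Ioi y, mtail G t

lemma mtail_nonneg (y : ℝ) : 0 ≤ mtail G y := ENNReal.toReal_nonneg

lemma mtail_anti : Antitone (mtail G) := fun y y' h =>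
  ENNReal.toReal_le_toReal (measure_ne_top _ _) (measure_ne_top _ _) |>.2
    (measure_mono (Ioi_subset_Ioi h))

variable {G}

lemma hpos (hlong : ∀ y, 0 < mtailInt G y) (y : ℝ) : 0 < mI G y := by
  have := hlong y
  unfold mtailInt at this
  unfold mI
  rcases lt_min_iff.1 this with ⟨-, h⟩
  exact h

lemma hint (hlong : ∀ y, 0 < mtailInt G y) (y : ℝ) :
    IntegrableOn (mtail G) (Set.Ioi y) := by
  by_contra h
  have := hpos hlong y
  rw [mI, integral_undef h] at this
  exact lt_irrefl _ this

lemma mI_anti (hlong : ∀ y, 0 < mtailInt G y) : Antitone (mI G) := by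
  intro y y' h
  exact setIntegral_mono_set (hint hlong y)
    (Filter.Eventually.of_forall fun t => mtail_nonneg G t)
    (HasSubset.Subset.eventuallyLE (Ioi_subset_Ioi h))

lemma mI_split (hlong : ∀ y, 0 < mtailInt G y) {x b : ℝ} (h : x ≤ b) :
    mI G x = (∫ t in Set.Ioc x b, mtail G t) + mI G b := by
  rw [mI, mI, ← Ioc_union_Ioi_eq_Ioi h,
    setIntegral_union (Set.Ioc_disjoint_Ioi le_rfl) measurableSet_Ioi
      ((hint hlong x).mono_set Ioc_subset_Ioi_self)
      ((hint hlong x).mono_set (Ioi_subset_Ioi h))]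

lemma Ioc_int_le (hlong : ∀ y, 0 < mtailInt G y) {a b : ℝ} (h : a ≤ b) :
    (∫ t in Set.Ioc a b, mtail G t) ≤ (b - a) * mtail G a := by
  have : (∫ t in Set.Ioc a b, mtail G t) ≤ ∫ _ in Set.Ioc a b, mtail G a :=
    setIntegral_mono_on ((hint hlong a).mono_set Ioc_subset_Ioi_self)
      (integrableOn_const (by simp [Real.volume_Ioc]))
      measurableSet_Ioc (fun t ht => mtail_anti G ht.1.le)
  rw [setIntegral_const, measureReal_def, Real.volume_Ioc, ENNReal.toReal_ofReal (by linarith), smul_eq_mul] at this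
  exact this

lemma le_Ioc_int (hlong : ∀ y, 0 < mtailInt G y) {a b : ℝ} (h : a ≤ b) :
    (b - a) * mtail G b ≤ ∫ t in Set.Ioc a b, mtail G t := by
  have : (∫ _ in Set.Ioc a b, mtail G b) ≤ ∫ t in Set.Ioc a b, mtail G t :=
    setIntegral_mono_on
      (integrableOn_const (by simp [Real.volume_Ioc]))
      ((hint hlong a).mono_set Ioc_subset_Ioi_self)
      measurableSet_Ioc (fun t ht => mtail_anti G ht.2)
  rw [setIntegral_const, measureReal_def, Real.volume_Ioc, ENNReal.toReal_ofReal (by linarith), smul_eq_mul] at this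
  exact this

lemma mI_tendsto (hlong : ∀ y, 0 < mtailInt G y) :
    Tendsto (mI G) atTop (nhds 0) := by
  have key : Tendsto (fun y : ℝ => mI G 0 - ∫ t in (0:ℝ)..y, mtail G t) atTop
      (nhds (mI G 0 - mI G 0)) :=
    Tendsto.const_sub _ (intervalIntegral_tendsto_integral_Ioi 0 (hint hlong 0) tendsto_id)
  rw [sub_self] at key
  refine key.congr' ?_
  filter_upwards [eventually_ge_atTop (0:ℝ)] with y hy
  rw [intervalIntegral.integral_of_le hy, mI_split hlong hy]
  ring

lemma mtailInt_eventually_eq (hlong : ∀ y, 0 < mtailInt G y) :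
    ∀ᶠ y in atTop, mtailInt G y = mI G y := by
  filter_upwards [(mI_tendsto hlong).eventually (eventually_lt_nhds zero_lt_one)] with y hy
  rw [mI] at hy
  unfold mtailInt mI
  exact min_eq_right hy.le

/-- ratio of mtailInt with arbitrary real shift tends to 1 -/
lemma ratio_tendsto (hl : LongTailedFun (mtailInt G)) (c : ℝ) :
    Tendsto (fun y => mtailInt G (y + c) / mtailInt G y) atTop (nhds 1) := by
  rcases lt_trichotomy c 0 with hc | hc | hc
  · have h1 : Tendsto (fun y => mtailInt G (y + (-c)) / mtailInt G y) atTop (nhds 1) :=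
      hl.2 (-c) (by linarith)
    have h2 : Tendsto (fun y => y + c) atTop atTop := tendsto_atTop_add_const_right _ _ tendsto_id
    have h3 := (h1.comp h2).inv₀ one_ne_zero
    rw [inv_one] at h3
    refine h3.congr fun y => ?_
    have : y + c + -c = y := by ring
    simp only [Function.comp, this]
    rw [inv_div]
  · subst hc
    simp only [add_zero]
    have : ∀ y : ℝ, mtailInt G y / mtailInt G y = 1 := fun y => div_self (hl.1 y).ne'
    simp only [this]
    exact tendsto_const_nhds
  · exact hl.2 c hc

/-- same with mI in the numerator -/
lemma ratio_tendsto' (hl : LongTailedFun (mtailInt G)) (c : ℝ) :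
    Tendsto (fun y => mI G (y + c) / mtailInt G y) atTop (nhds 1) := by
  refine (ratio_tendsto hl c).congr' ?_
  have h2 : Tendsto (fun y : ℝ => y + c) atTop atTop := tendsto_atTop_add_const_right _ _ tendsto_id
  filter_upwards [h2.eventually (mtailInt_eventually_eq hl.1)] with y hy
  rw [hy]

/-- `Ḡ(y+c)/Ḡˢ(y) → 0` for every fixed `c`. -/
lemma mtail_ratio_tendsto (hl : LongTailedFun (mtailInt G)) (c : ℝ) :
    Tendsto (fun y => mtail G (y + c) / mtailInt G y) atTop (nhds 0) := by
  have hb : ∀ y : ℝ, mtail G (y + c) ≤ mI G (y + (c - 1)) - mI G (y + c) := by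
    intro y
    have hle : y + (c - 1) ≤ y + c := by linarith
    have := le_Ioc_int hl.1 hle
    rw [mI_split hl.1 hle]
    have : (1:ℝ) * mtail G (y + c) ≤ ∫ t in Set.Ioc (y + (c-1)) (y + c), mtail G t := by
      have h1 : (y + c) - (y + (c - 1)) = 1 := by ring
      calc (1:ℝ) * mtail G (y+c) = ((y+c) - (y+(c-1))) * mtail G (y+c) := by rw [h1]
        _ ≤ _ := le_Ioc_int hl.1 hle
    linarith
  have hupper : Tendsto (fun y => mI G (y + (c-1)) / mtailInt G y - mI G (y + c) / mtailInt G y)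
      atTop (nhds 0) := by
    have := (ratio_tendsto' hl (c-1)).sub (ratio_tendsto' hl c)
    rwa [sub_self] at this
  refine tendsto_of_tendsto_of_tendsto_of_le_of_le tendsto_const_nhds hupper ?_ ?_
  · intro y
    exact div_nonneg (mtail_nonneg G _) (hl.1 y).le
  · intro y
    dsimp only
    rw [div_sub_div_same]
    exact (div_le_div_iff_of_pos_right (hl.1 y)).2 (hb y)

lemma mI_nonneg (y : ℝ) : 0 ≤ mI G y :=
  setIntegral_nonneg measurableSet_Ioi fun t _ => mtail_nonneg G t

lemma interval_sum (hlong : ∀ y, 0 < mtailInt G y) (x g : ℝ) (hg : 0 < g) (N : ℕ) :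
    (∫ t in Set.Ioc x (x + N * g), mtail G t)
      = ∑ i ∈ Finset.range N, ∫ t in Set.Ioc (x + i * g) (x + (i + 1 : ℕ) * g), mtail G t := by
  induction N with
  | zero => simp
  | succ N ih =>
    have hc : ((N + 1 : ℕ) : ℝ) = (N : ℝ) + 1 := by push_cast; ring
    have hNg : (0:ℝ) ≤ (N:ℝ) * g := by positivity
    have h1 : x ≤ x + (N:ℝ) * g := by linarith
    have h2 : x + (N:ℝ) * g ≤ x + ((N:ℝ) + 1) * g := by nlinarith
    have disj : Disjoint (Set.Ioc x (x + (N:ℝ) * g))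
        (Set.Ioc (x + (N:ℝ) * g) (x + ((N:ℝ) + 1) * g)) := by
      rw [Set.disjoint_left]; rintro t ⟨_, h⟩ ⟨h', _⟩; exact absurd h' (not_lt.2 h)
    rw [Finset.sum_range_succ, ← ih, hc,
      ← Set.Ioc_union_Ioc_eq_Ioc h1 h2,
      setIntegral_union disj measurableSet_Ioc
        ((hint hlong x).mono_set Set.Ioc_subset_Ioi_self)
        ((hint hlong (x + (N:ℝ) * g)).mono_set Set.Ioc_subset_Ioi_self)]

lemma sum_le_mI (hlong : ∀ y, 0 < mtailInt G y) (x g : ℝ) (hg : 0 < g) (N : ℕ) :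
    g * ∑ i ∈ Finset.range N, mtail G (x + (i + 1 : ℕ) * g) ≤ mI G x := by
  have h1 : x ≤ x + (N:ℝ) * g := le_add_of_nonneg_right (by positivity)
  calc g * ∑ i ∈ Finset.range N, mtail G (x + (i + 1 : ℕ) * g)
      = ∑ i ∈ Finset.range N, g * mtail G (x + (i + 1 : ℕ) * g) := Finset.mul_sum _ _ _
    _ ≤ ∑ i ∈ Finset.range N, ∫ t in Set.Ioc (x + i * g) (x + (i + 1 : ℕ) * g), mtail G t := by
        refine Finset.sum_le_sum fun i _ => ?_
        have hc : ((i + 1 : ℕ) : ℝ) = (i : ℝ) + 1 := by push_cast; ring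
        have hle : x + (i:ℝ) * g ≤ x + ((i:ℝ) + 1) * g := by nlinarith
        have := le_Ioc_int hlong hle
        rw [hc]
        calc g * mtail G (x + ((i:ℝ) + 1) * g)
            = ((x + ((i:ℝ)+1)*g) - (x + (i:ℝ)*g)) * mtail G (x + ((i:ℝ)+1)*g) := by ring_nf
          _ ≤ _ := this
    _ = ∫ t in Set.Ioc x (x + N * g), mtail G t := (interval_sum hlong x g hg N).symm
    _ ≤ mI G x := by
        rw [mI_split hlong h1]
        have := mI_nonneg (G := G) (x + (N:ℝ) * g)
        linarith

lemma mI_le_sum (hlong : ∀ y, 0 < mtailInt G y) (x g : ℝ) (hg : 0 < g) (N : ℕ) :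
    mI G x ≤ g * (∑ i ∈ Finset.range N, mtail G (x + i * g)) + mI G (x + N * g) := by
  have h1 : x ≤ x + (N:ℝ) * g := le_add_of_nonneg_right (by positivity)
  rw [mI_split hlong h1, interval_sum hlong x g hg N, Finset.mul_sum]
  refine add_le_add (Finset.sum_le_sum fun i _ => ?_) le_rfl
  have hc : ((i + 1 : ℕ) : ℝ) = (i : ℝ) + 1 := by push_cast; ring
  have hle : x + (i:ℝ) * g ≤ x + ((i:ℝ) + 1) * g := by nlinarith
  have := Ioc_int_le hlong hle
  rw [hc]
  calc (∫ t in Set.Ioc (x + (i:ℝ)*g) (x + ((i:ℝ)+1)*g), mtail G t)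
      ≤ ((x + ((i:ℝ)+1)*g) - (x + (i:ℝ)*g)) * mtail G (x + (i:ℝ)*g) := this
    _ = g * mtail G (x + (i:ℝ)*g) := by ring_nf

lemma summable_mtail (hlong : ∀ y, 0 < mtailInt G y) (x g : ℝ) (hg : 0 < g) :
    Summable (fun n : ℕ => mtail G (x + n * g)) := by
  have h1 : Summable (fun n : ℕ => mtail G (x + (n + 1 : ℕ) * g)) := by
    refine summable_of_sum_range_le (c := mI G x / g) (fun n => mtail_nonneg G _) (fun N => ?_)
    rw [le_div_iff₀' hg]
    exact sum_le_mI hlong x g hg N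
  exact (summable_nat_add_iff (f := fun n : ℕ => mtail G (x + n * g)) 1).1 h1

lemma tsum_upper (hlong : ∀ y, 0 < mtailInt G y) (x g : ℝ) (hg : 0 < g) :
    mI G x ≤ g * ∑' n : ℕ, mtail G (x + n * g) := by
  have htend : Tendsto (fun N : ℕ => g * (∑ i ∈ Finset.range N, mtail G (x + i * g))
      + mI G (x + N * g)) atTop (nhds (g * ∑' n : ℕ, mtail G (x + n * g) + 0)) := by
    refine Tendsto.add (Tendsto.const_mul g ?_) ?_
    · exact (summable_mtail hlong x g hg).hasSum.tendsto_sum_nat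
    · refine (mI_tendsto hlong).comp ?_
      refine tendsto_atTop_add_const_left _ x ?_
      exact (tendsto_natCast_atTop_atTop (R := ℝ)).atTop_mul_const hg
  rw [add_zero] at htend
  exact ge_of_tendsto htend (Filter.Eventually.of_forall fun N => mI_le_sum hlong x g hg N)

lemma tsum_lower (hlong : ∀ y, 0 < mtailInt G y) (x g : ℝ) (hg : 0 < g) :
    g * ∑' n : ℕ, mtail G (x + n * g) ≤ mI G x + g * mtail G x := by
  have hsum := summable_mtail hlong x g hg
  rw [Summable.tsum_eq_zero_add hsum]
  simp only [Nat.cast_zero, zero_mul, add_zero]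
  have htail : (∑' n : ℕ, mtail G (x + (n + 1 : ℕ) * g)) ≤ mI G x / g := by
    refine Summable.tsum_le_of_sum_range_le ((summable_nat_add_iff (f := fun n : ℕ => mtail G (x + n * g)) 1).2 hsum) (fun N => ?_)
    rw [le_div_iff₀' hg]
    exact sum_le_mI hlong x g hg N
  have := mul_le_mul_of_nonneg_left htail hg.le
  rw [mul_div_cancel₀ _ hg.ne'] at this
  nlinarith [this]

lemma S_ratio (hl : LongTailedFun (mtailInt G)) (g : ℝ) (hg : 0 < g) (c : ℝ) :
    Tendsto (fun y => (∑' n : ℕ, mtail G ((y + c) + n * g)) / mtailInt G y) atTop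
      (nhds (1 / g)) := by
  have hlow : Tendsto (fun y => (mI G (y + c) / mtailInt G y) / g) atTop (nhds (1 / g)) :=
    (ratio_tendsto' hl c).div_const g
  have hhigh : Tendsto (fun y => (mI G (y + c) / mtailInt G y) / g
      + mtail G (y + c) / mtailInt G y) atTop (nhds (1 / g)) := by
    have := hlow.add (mtail_ratio_tendsto hl c)
    rwa [add_zero] at this
  refine tendsto_of_tendsto_of_tendsto_of_le_of_le hlow hhigh ?_ ?_
  · intro y
    dsimp only
    rw [div_right_comm]
    refine (div_le_div_iff_of_pos_right (hl.1 y)).2 ?_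
    rw [div_le_iff₀' hg]
    exact tsum_upper hl.1 (y + c) g hg
  · intro y
    dsimp only
    rw [div_right_comm, ← add_div]
    refine (div_le_div_iff_of_pos_right (hl.1 y)).2 ?_
    have h := tsum_lower hl.1 (y + c) g hg
    rw [← le_div_iff₀' hg] at h
    refine h.trans (le_of_eq ?_)
    field_simp

lemma E_ratio (hl : LongTailedFun (mtailInt G)) (g : ℝ) (hg : 0 < g) (c : ℝ)
    (β : ℕ → ℝ) (hβ : Tendsto β atTop (nhds 0)) :
    Tendsto (fun y => (∑' n : ℕ, β n * mtail G ((y + c) + n * g)) / mtailInt G y) atTop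
      (nhds 0) := by
  -- a uniform bound on β
  obtain ⟨C, hCmem⟩ := (by simpa using hβ.abs : Tendsto (fun n => |β n|) atTop (nhds 0)).bddAbove_range
  have hC : ∀ n, |β n| ≤ C := fun n => hCmem ⟨n, rfl⟩
  have hC0 : 0 ≤ C := (abs_nonneg _).trans (hC 0)
  have hsum : ∀ y : ℝ, Summable (fun n : ℕ => mtail G ((y + c) + n * g)) :=
    fun y => summable_mtail hl.1 (y + c) g hg
  have habs : ∀ y : ℝ, Summable (fun n : ℕ => |β n| * mtail G ((y + c) + n * g)) := by
    intro y
    refine Summable.of_nonneg_of_le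
      (fun n => mul_nonneg (abs_nonneg _) (mtail_nonneg G _))
      (fun n => mul_le_mul_of_nonneg_right (hC n) (mtail_nonneg G _))
      ((hsum y).mul_left C)
  rw [NormedAddCommGroup.tendsto_nhds_zero]
  intro ε hε
  have hε' : 0 < ε * g / 4 := by positivity
  obtain ⟨M, hM⟩ := Metric.tendsto_atTop.1 hβ (ε * g / 4) hε'
  simp only [Real.dist_eq, sub_zero] at hM
  set D : ℝ := (M : ℝ) * C + 1 with hD
  have hD0 : 0 < D := by positivity
  have ev1 : ∀ᶠ y in atTop, mtail G (y + c) / mtailInt G y < ε / (4 * D) :=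
    (mtail_ratio_tendsto hl c).eventually (eventually_lt_nhds (by positivity))
  have ev2 : ∀ᶠ y in atTop,
      (∑' n : ℕ, mtail G ((y + c) + n * g)) / mtailInt G y < 2 / g := by
    refine (S_ratio hl g hg c).eventually (eventually_lt_nhds ?_)
    rw [div_lt_div_iff_of_pos_right hg]
    norm_num
  filter_upwards [ev1, ev2] with y h1 h2
  have hpos := hl.1 y
  -- bound |E y|
  have hEbound : |∑' n : ℕ, β n * mtail G ((y + c) + n * g)|
      ≤ (M : ℝ) * C * mtail G (y + c)
        + ε * g / 4 * (∑' n : ℕ, mtail G ((y + c) + n * g)) := by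
    have step1 : |∑' n : ℕ, β n * mtail G ((y + c) + n * g)|
        ≤ ∑' n : ℕ, |β n| * mtail G ((y + c) + n * g) := by
      have := norm_tsum_le_tsum_norm (f := fun n : ℕ => β n * mtail G ((y + c) + n * g)) ?_
      · refine this.trans (le_of_eq (tsum_congr fun n => ?_))
        rw [Real.norm_eq_abs, abs_mul, abs_of_nonneg (mtail_nonneg G _)]
      · refine (habs y).congr fun n => ?_
        rw [Real.norm_eq_abs, abs_mul, abs_of_nonneg (mtail_nonneg G _)]
    refine step1.trans ?_
    rw [← Summable.sum_add_tsum_nat_add M (habs y)]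
    have front : (∑ i ∈ Finset.range M, |β i| * mtail G ((y + c) + i * g))
        ≤ (M : ℝ) * C * mtail G (y + c) := by
      calc (∑ i ∈ Finset.range M, |β i| * mtail G ((y + c) + i * g))
          ≤ ∑ _i ∈ Finset.range M, C * mtail G (y + c) := by
            refine Finset.sum_le_sum fun i _ => mul_le_mul (hC i)
              (mtail_anti G (le_add_of_nonneg_right (by positivity)))
              (mtail_nonneg G _) hC0
        _ = (M : ℝ) * C * mtail G (y + c) := by
            rw [Finset.sum_const, Finset.card_range, nsmul_eq_mul]; ring
    have tail : (∑' n : ℕ, |β (n + M)| * mtail G ((y + c) + ((n + M : ℕ) : ℝ) * g))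
        ≤ ε * g / 4 * (∑' n : ℕ, mtail G ((y + c) + n * g)) := by
      have t1 : Summable (fun n : ℕ => |β (n + M)| * mtail G ((y + c) + ((n + M : ℕ) : ℝ) * g)) :=
        (summable_nat_add_iff (f := fun n : ℕ => |β n| * mtail G ((y + c) + n * g)) M).2 (habs y)
      have t2 : Summable (fun n : ℕ => ε * g / 4 * mtail G ((y + c) + ((n + M : ℕ) : ℝ) * g)) :=
        ((summable_nat_add_iff (f := fun n : ℕ => mtail G ((y + c) + n * g)) M).2
          (hsum y)).mul_left _
      have t3 : (∑' n : ℕ, |β (n + M)| * mtail G ((y + c) + ((n + M : ℕ) : ℝ) * g))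
          ≤ ∑' n : ℕ, ε * g / 4 * mtail G ((y + c) + ((n + M : ℕ) : ℝ) * g) := by
        refine Summable.tsum_le_tsum (fun n => mul_le_mul_of_nonneg_right
          (le_of_lt (hM (n + M) (Nat.le_add_left M n))) (mtail_nonneg G _)) t1 t2
      refine t3.trans ?_
      rw [tsum_mul_left]
      refine mul_le_mul_of_nonneg_left ?_ hε'.le
      have hsplit := Summable.sum_add_tsum_nat_add M (hsum y)
      have hfront : 0 ≤ ∑ i ∈ Finset.range M, mtail G ((y + c) + i * g) :=
        Finset.sum_nonneg fun i _ => mtail_nonneg G _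
      linarith
    exact add_le_add front tail
  -- conclude
  rw [Real.norm_eq_abs, abs_div, abs_of_pos hpos]
  have key : |∑' n : ℕ, β n * mtail G ((y + c) + n * g)| / mtailInt G y
      ≤ (M : ℝ) * C * (mtail G (y + c) / mtailInt G y)
        + ε * g / 4 * ((∑' n : ℕ, mtail G ((y + c) + n * g)) / mtailInt G y) := by
    rw [mul_div_assoc' _ _ (mtailInt G y), mul_div_assoc' _ _ (mtailInt G y), ← add_div]
    exact (div_le_div_iff_of_pos_right hpos).2 hEbound
  have b1 : (M : ℝ) * C * (mtail G (y + c) / mtailInt G y) ≤ (M : ℝ) * C * (ε / (4 * D)) :=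
    mul_le_mul_of_nonneg_left h1.le (by positivity)
  have b1' : (M : ℝ) * C * (ε / (4 * D)) ≤ ε / 4 := by
    have hle : (M : ℝ) * C ≤ D := by rw [hD]; linarith
    have hnn : 0 ≤ ε / (4 * D) := by positivity
    have h' := mul_le_mul_of_nonneg_right hle hnn
    have heq : D * (ε / (4 * D)) = ε / 4 := by
      field_simp
    linarith
  have b2 : ε * g / 4 * ((∑' n : ℕ, mtail G ((y + c) + n * g)) / mtailInt G y)
      ≤ ε * g / 4 * (2 / g) := mul_le_mul_of_nonneg_left h2.le hε'.le
  have b2' : ε * g / 4 * (2 / g) = ε / 2 := by field_simp; ring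
  calc |∑' n : ℕ, β n * mtail G ((y + c) + n * g)| / mtailInt G y
      ≤ _ := key
    _ ≤ ε / 4 + ε / 2 := by rw [← b2']; exact add_le_add (b1.trans b1') b2
    _ < ε := by linarith

end

noncomputable section

/-- **Property 3, second part.**  If `Gˢ` is long-tailed then for any `g > 0` and any
sequence `α_n → α`, for every `k` and `l`,
`lim_{y→∞} (1/Ḡˢ(y)) ∑_{n≥k} α_n Ḡ(y + l + ng) = α/g`. -/
theorem statement13
    (G : Measure ℝ) [IsProbabilityMeasure G]
    (hlong : LongTailedFun (mtailInt G)) :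
    ∀ g > (0:ℝ), ∀ (α : ℕ → ℝ) (A : ℝ), Tendsto α atTop (nhds A) →
      ∀ (k : ℕ) (l : ℝ),
        Tendsto (fun y =>
            (∑' n : ℕ, α (n + k) * mtail G (y + l + ((n + k : ℕ) : ℝ) * g)) / mtailInt G y)
          atTop (nhds (A / g)) := by
  intro g hg α A hα k l
  set c := l + (k : ℝ) * g with hc
  have hfun : (fun y => (∑' n : ℕ, α (n + k) * mtail G (y + l + ((n + k : ℕ) : ℝ) * g))
        / mtailInt G y)
      = fun y => (∑' n : ℕ, α (n + k) * mtail G ((y + c) + n * g)) / mtailInt G y := by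
    funext y
    congr 1
    refine tsum_congr fun n => ?_
    congr 2
    push_cast [hc]
    ring
  rw [hfun]
  have hsum : ∀ y : ℝ, Summable (fun n : ℕ => mtail G ((y + c) + n * g)) :=
    fun y => summable_mtail hlong.1 (y + c) g hg
  have hβ : Tendsto (fun n => α (n + k) - A) atTop (nhds 0) := by
    have h1 : Tendsto (fun n : ℕ => n + k) atTop atTop :=
      tendsto_add_atTop_nat k
    have := (hα.comp h1).sub_const A
    simpa using this
  obtain ⟨C, hC⟩ : ∃ C, ∀ n, |α (n + k) - A| ≤ C := by
    obtain ⟨C, hCmem⟩ := (by simpa using hβ.abs :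
      Tendsto (fun n => |α (n + k) - A|) atTop (nhds 0)).bddAbove_range
    exact ⟨C, fun n => hCmem ⟨n, rfl⟩⟩
  have hsumβ : ∀ y : ℝ, Summable (fun n : ℕ => (α (n + k) - A) * mtail G ((y + c) + n * g)) := by
    intro y
    refine Summable.of_abs (Summable.of_nonneg_of_le (fun n => abs_nonneg _) (fun n => ?_)
      ((hsum y).mul_left C))
    rw [abs_mul, abs_of_nonneg (mtail_nonneg G _)]
    exact mul_le_mul_of_nonneg_right (hC n) (mtail_nonneg G _)
  have hdec : ∀ y : ℝ, (∑' n : ℕ, α (n + k) * mtail G ((y + c) + n * g))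
      = A * (∑' n : ℕ, mtail G ((y + c) + n * g))
        + ∑' n : ℕ, (α (n + k) - A) * mtail G ((y + c) + n * g) := by
    intro y
    rw [← tsum_mul_left, ← Summable.tsum_add ((hsum y).mul_left A) (hsumβ y)]
    exact tsum_congr fun n => by ring
  have htarget : Tendsto (fun y =>
      A * ((∑' n : ℕ, mtail G ((y + c) + n * g)) / mtailInt G y)
      + (∑' n : ℕ, (α (n + k) - A) * mtail G ((y + c) + n * g)) / mtailInt G y)
      atTop (nhds (A * (1 / g) + 0)) :=
    ((S_ratio hlong g hg c).const_mul A).add (E_ratio hlong g hg c _ hβ)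
  rw [mul_one_div, add_zero] at htarget
  refine htarget.congr fun y => ?_
  rw [hdec y, add_div, mul_div_assoc]
end
end

section
/- Let ξ_1, ξ_2, …, ξ_n be n mutually independent random variables and G a subexponential distribution function such that, for each i = 1,…,n, P(ξ_i > y) ~ c_i Ḡ(y) as y → ∞ for constants c_1,…,c_n ≥ 0 (with c_i = 0 interpreted as P(ξ_i > y) = o(Ḡ(y))). Then P(ξ_1 + ξ_2 + … + ξ_n > y) ~ (c_1 + c_2 + … + c_n) Ḡ(y) as y → ∞. -/
open MeasureTheory ProbabilityTheory Filter Set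

noncomputable section

set_option maxHeartbeats 1000000

lemma st14_mtail_nonneg (μ : Measure ℝ) (y : ℝ) : 0 ≤ mtail μ y := ENNReal.toReal_nonneg

lemma st14_mtail_anti (μ : Measure ℝ) [IsFiniteMeasure μ] : Antitone (mtail μ) :=
  fun _ _ hab => ENNReal.toReal_mono (measure_ne_top μ _) (measure_mono (Ioi_subset_Ioi hab))

lemma st14_mtail_tendsto_zero (μ : Measure ℝ) [IsFiniteMeasure μ] :
    Tendsto (mtail μ) atTop (nhds 0) := by
  have h0 : (⋂ y : ℝ, Ioi y) = (∅ : Set ℝ) := by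
    ext x
    simp only [mem_iInter, mem_Ioi, mem_empty_iff_false, iff_false, not_forall, not_lt]
    exact ⟨x, le_rfl⟩
  have h : Tendsto (fun y : ℝ => μ (Ioi y)) atTop (nhds (μ (⋂ y : ℝ, Ioi y))) :=
    tendsto_measure_iInter_atTop (fun _ => measurableSet_Ioi.nullMeasurableSet)
      (fun _ _ hab => Ioi_subset_Ioi hab) ⟨0, measure_ne_top μ _⟩
  rw [h0, measure_empty] at h
  have := (ENNReal.tendsto_toReal (by simp)).comp h
  exact this

lemma st14_mtail_Iio_tendsto_zero (μ : Measure ℝ) [IsFiniteMeasure μ] :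
    Tendsto (fun A : ℝ => (μ (Iio (-A))).toReal) atTop (nhds 0) := by
  have h0 : (⋂ A : ℝ, Iio (-A)) = (∅ : Set ℝ) := by
    ext x
    simp only [mem_iInter, mem_Iio, mem_empty_iff_false, iff_false, not_forall, not_lt]
    exact ⟨-x, by linarith⟩
  have h : Tendsto (fun A : ℝ => μ (Iio (-A))) atTop (nhds (μ (⋂ A : ℝ, Iio (-A)))) :=
    tendsto_measure_iInter_atTop (fun _ => measurableSet_Iio.nullMeasurableSet)
      (fun a b hab => Iio_subset_Iio (by linarith)) ⟨0, measure_ne_top μ _⟩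
  rw [h0, measure_empty] at h
  have := (ENNReal.tendsto_toReal (by simp)).comp h
  simpa [Function.comp_def] using this

lemma st14_mtail_map {Ω : Type*} [MeasurableSpace Ω] (P : Measure Ω) {X : Ω → ℝ}
    (hX : Measurable X) (y : ℝ) :
    mtail (P.map X) y = (P {ω | X ω > y}).toReal := by
  rw [mtail, Measure.map_apply hX measurableSet_Ioi]
  rfl

lemma st14_mtail_mconv (μ ν : Measure ℝ) [SFinite μ] [SFinite ν] (y : ℝ) :
    mtail (mconv μ ν) y = ((μ.prod ν) {p : ℝ × ℝ | p.1 + p.2 > y}).toReal := by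
  rw [mtail, mconv, Measure.map_apply (f := fun p : ℝ × ℝ => p.1 + p.2) (by fun_prop) measurableSet_Ioi]
  rfl

lemma st14_toReal_compl {α : Type*} [MeasurableSpace α] {μ : Measure α} [IsProbabilityMeasure μ]
    {s : Set α} (hs : MeasurableSet s) : (μ sᶜ).toReal = 1 - (μ s).toReal := by
  rw [prob_compl_eq_one_sub hs, ENNReal.toReal_sub_of_le prob_le_one ENNReal.one_ne_top]
  simp

lemma st14_toReal_union_le {α : Type*} [MeasurableSpace α] (μ : Measure α) [IsFiniteMeasure μ]
    (s t : Set α) : (μ (s ∪ t)).toReal ≤ (μ s).toReal + (μ t).toReal := by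
  rw [← ENNReal.toReal_add (measure_ne_top μ s) (measure_ne_top μ t)]
  exact ENNReal.toReal_mono (by simp [ENNReal.add_ne_top, measure_ne_top])
    (measure_union_le s t)

lemma st14_Icc_compl (A : ℝ) : Icc (-A) A = (Iio (-A) ∪ Ioi A)ᶜ := by
  ext x
  simp only [mem_Icc, mem_compl_iff, mem_union, mem_Iio, mem_Ioi, not_or, not_lt]

lemma st14_toReal_Icc_ge {μ : Measure ℝ} [IsProbabilityMeasure μ] (A : ℝ) :
    1 - (μ (Iio (-A))).toReal - (μ (Ioi A)).toReal ≤ (μ (Icc (-A) A)).toReal := by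
  rw [st14_Icc_compl, st14_toReal_compl (measurableSet_Iio.union measurableSet_Ioi)]
  have := st14_toReal_union_le μ (Iio (-A)) (Ioi A)
  linarith

lemma st14_Icc_nonneg_compl (A : ℝ) : Icc (0:ℝ) A = (Iio 0 ∪ Ioi A)ᶜ := by
  ext x
  simp only [mem_Icc, mem_compl_iff, mem_union, mem_Iio, mem_Ioi, not_or, not_lt]

lemma st14_toReal_Icc0_ge {μ : Measure ℝ} [IsProbabilityMeasure μ] (hpos : μ (Iio 0) = 0) (A : ℝ) :
    1 - mtail μ A ≤ (μ (Icc (0:ℝ) A)).toReal := by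
  rw [st14_Icc_nonneg_compl, st14_toReal_compl (measurableSet_Iio.union measurableSet_Ioi)]
  have h := st14_toReal_union_le μ (Iio 0) (Ioi A)
  rw [hpos] at h
  simp only [ENNReal.toReal_zero, zero_add] at h
  have : (μ (Ioi A)).toReal = mtail μ A := rfl
  linarith

lemma st14_Ici0_one {μ : Measure ℝ} [IsProbabilityMeasure μ] (hpos : μ (Iio 0) = 0) :
    (μ (Ici (0:ℝ))).toReal = 1 := by
  have : Ici (0:ℝ) = (Iio 0)ᶜ := (compl_Iio).symm
  rw [this, st14_toReal_compl measurableSet_Iio, hpos]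
  simp

lemma st14_longtail {G : Measure ℝ} [IsProbabilityMeasure G] (hGpos : G (Iio 0) = 0)
    (hGsub : Subexp G) {z : ℝ} (hz : 0 ≤ z) {ε : ℝ} (hε : 0 < ε) :
    ∀ᶠ y in atTop, mtail G (y - z) ≤ (1 + ε) * mtail G y := by
  set g := mtail G with hgdef
  have hgz : 0 < g z := hGsub.1 z
  have hconv : ∀ᶠ y in atTop, mtail (mconv G G) y ≤ (2 + ε * g z / 2) * g y := by
    have h2 : ∀ᶠ y in atTop, mtail (mconv G G) y / g y < 2 + ε * g z / 2 :=
      hGsub.2.eventually_lt_const (by nlinarith [mul_pos hε hgz])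
    filter_upwards [h2] with y hy
    have hgy : 0 < g y := hGsub.1 y
    calc mtail (mconv G G) y = mtail (mconv G G) y / g y * g y := by field_simp
    _ ≤ (2 + ε * g z / 2) * g y := mul_le_mul_of_nonneg_right hy.le hgy.le
  have hsmall : ∀ᶠ y in atTop, g y < ε * g z / (2 * (1 + ε)) :=
    (st14_mtail_tendsto_zero G).eventually_lt_const (by positivity)
  filter_upwards [hconv, hsmall, eventually_gt_atTop z] with y hc1 hc2 hyz
  have hgy : 0 < g y := hGsub.1 y
  -- superadditivity over three disjoint rectangles
  set SA : Set (ℝ × ℝ) := Ioi y ×ˢ Ici 0 with hSA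
  set SB : Set (ℝ × ℝ) := Icc 0 z ×ˢ Ioi y with hSB
  set SC : Set (ℝ × ℝ) := Ioc z y ×ˢ Ioi (y - z) with hSC
  have hsub : SA ∪ SB ∪ SC ⊆ {p : ℝ × ℝ | p.1 + p.2 > y} := by
    rintro ⟨s, t⟩ ((h | h) | h) <;>
      · simp only [hSA, hSB, hSC, mem_prod, mem_Ioi, mem_Ici, mem_Icc, mem_Ioc] at h
        simp only [mem_setOf_eq]
        rcases h with ⟨h1, h2⟩
        first
        | (rcases h1 with ⟨h1a, h1b⟩; linarith)
        | linarith
  have hdAB : Disjoint SA SB := by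
    rw [Set.disjoint_left]
    rintro ⟨s, t⟩ hp hq
    simp only [hSA, hSB, mem_prod, mem_Ioi, mem_Icc] at hp hq
    linarith [hp.1, hq.1.2]
  have hdABC : Disjoint (SA ∪ SB) SC := by
    rw [Set.disjoint_left]
    rintro ⟨s, t⟩ hp hq
    simp only [hSC, mem_prod, mem_Ioc] at hq
    rcases hp with hp | hp <;> simp only [hSA, hSB, mem_prod, mem_Ioi, mem_Icc] at hp
    · linarith [hp.1, hq.1.2]
    · linarith [hp.1.2, hq.1.1]
  have hmeasB : MeasurableSet SB := (measurableSet_Icc).prod measurableSet_Ioi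
  have hmeasC : MeasurableSet SC := (measurableSet_Ioc).prod measurableSet_Ioi
  have hadd : (G.prod G) SA + (G.prod G) SB + (G.prod G) SC
      ≤ (G.prod G) {p : ℝ × ℝ | p.1 + p.2 > y} := by
    rw [← measure_union hdAB hmeasB, ← measure_union hdABC hmeasC]
    exact measure_mono hsub
  have hfin : ∀ s : Set (ℝ × ℝ), (G.prod G) s ≠ ⊤ := fun s => measure_ne_top _ s
  have hreal : ((G.prod G) SA).toReal + ((G.prod G) SB).toReal + ((G.prod G) SC).toReal
      ≤ mtail (mconv G G) y := by
    rw [st14_mtail_mconv]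
    rw [← ENNReal.toReal_add (hfin SA) (hfin SB), ← ENNReal.toReal_add (by
      exact ENNReal.add_ne_top.mpr ⟨hfin SA, hfin SB⟩) (hfin SC)]
    exact ENNReal.toReal_mono (hfin _) hadd
  have hA : ((G.prod G) SA).toReal = g y := by
    rw [hSA, Measure.prod_prod, ENNReal.toReal_mul, st14_Ici0_one hGpos, mul_one]
    rfl
  have hB : ((G.prod G) SB).toReal = (G (Icc (0:ℝ) z)).toReal * g y := by
    rw [hSB, Measure.prod_prod, ENNReal.toReal_mul]
    rfl
  have hC : ((G.prod G) SC).toReal = (G (Ioc z y)).toReal * g (y - z) := by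
    rw [hSC, Measure.prod_prod, ENNReal.toReal_mul]
    rfl
  have ha : 1 - g z ≤ (G (Icc (0:ℝ) z)).toReal := st14_toReal_Icc0_ge hGpos z
  have hb : (G (Ioc z y)).toReal = g z - g y := by
    have hun : G (Ioi z) = G (Ioc z y) + G (Ioi y) := by
      rw [← Ioc_union_Ioi_eq_Ioi hyz.le]
      rw [measure_union (by
        rw [Set.disjoint_left]; intro x hx1 hx2
        exact absurd hx2 (not_lt.mpr hx1.2)) measurableSet_Ioi]
    have := congrArg ENNReal.toReal hun
    rw [ENNReal.toReal_add (measure_ne_top _ _) (measure_ne_top _ _)] at this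
    have h1 : (G (Ioi z)).toReal = g z := rfl
    have h2 : (G (Ioi y)).toReal = g y := rfl
    rw [h1, h2] at this
    linarith
  -- now real arithmetic
  have key : (g z - g y) * g (y - z) ≤ (g z + ε * g z / 2) * g y := by
    rw [hA, hB, hC, hb] at hreal
    nlinarith [hreal, hc1, mul_le_mul_of_nonneg_right ha hgy.le]
  have h1ε : (0:ℝ) < 1 + ε := by linarith
  have h4 : (1 + ε) * g y ≤ ε * g z / 2 := by
    have heq : (1 + ε) * (ε * g z / (2 * (1 + ε))) = ε * g z / 2 := by
      field_simp
    nlinarith [hc2]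
  have hpos2 : 0 < g z - g y := by nlinarith
  have h3 : (g z - g y) * g (y - z) ≤ (g z - g y) * ((1 + ε) * g y) := by
    nlinarith [key, hgy]
  exact le_of_mul_le_mul_left (by linarith [h3]) hpos2

lemma st14_twovar {Ω : Type*} [MeasurableSpace Ω] (P : Measure Ω) [IsProbabilityMeasure P]
    {X Y : Ω → ℝ} (hX : Measurable X) (hY : Measurable Y) (hXY : IndepFun X Y P)
    {G : Measure ℝ} [IsProbabilityMeasure G] (hGpos : G (Iio 0) = 0) (hGsub : Subexp G)
    {c d : ℝ} (hc : 0 ≤ c) (hd : 0 ≤ d)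
    (hXt : (fun y => (P {ω | X ω > y}).toReal - c * mtail G y) =o[atTop] fun y => mtail G y)
    (hYt : (fun y => (P {ω | Y ω > y}).toReal - d * mtail G y) =o[atTop] fun y => mtail G y) :
    (fun y => (P {ω | X ω + Y ω > y}).toReal - (c + d) * mtail G y)
      =o[atTop] fun y => mtail G y := by
  classical
  set g : ℝ → ℝ := mtail G with hgdef
  set μ : Measure ℝ := P.map X with hμdef
  set ν : Measure ℝ := P.map Y with hνdef
  haveI : IsProbabilityMeasure μ := Measure.isProbabilityMeasure_map hX.aemeasurable
  haveI : IsProbabilityMeasure ν := Measure.isProbabilityMeasure_map hY.aemeasurable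
  set f : ℝ → ℝ := mtail μ with hfdef
  set m : ℝ → ℝ := mtail ν with hmdef
  have hfX : ∀ y, f y = (P {ω | X ω > y}).toReal := fun y => st14_mtail_map P hX y
  have hmY : ∀ y, m y = (P {ω | Y ω > y}).toReal := fun y => st14_mtail_map P hY y
  have hXt' : (fun y => f y - c * g y) =o[atTop] g := by
    have he : (fun y => f y - c * g y) = (fun y => (P {ω | X ω > y}).toReal - c * g y) := by
      funext y; rw [hfX]
    rw [he]; exact hXt
  have hYt' : (fun y => m y - d * g y) =o[atTop] g := by
    have he : (fun y => m y - d * g y) = (fun y => (P {ω | Y ω > y}).toReal - d * g y) := by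
      funext y; rw [hmY]
    rw [he]; exact hYt
  have hJ : P.map (fun ω => (X ω, Y ω)) = μ.prod ν :=
    (indepFun_iff_map_prod_eq_prod_map_map hX.aemeasurable hY.aemeasurable).mp hXY
  have hkey : ∀ S : Set (ℝ × ℝ), MeasurableSet S →
      P ((fun ω => (X ω, Y ω)) ⁻¹' S) = (μ.prod ν) S := by
    intro S hS
    rw [← hJ, Measure.map_apply (hX.prodMk hY) hS]
  rw [Asymptotics.isLittleO_iff]
  intro δ hδ
  set C : ℝ := 20 * (c + 1) * (d + 1) with hCdef
  have hCpos : 0 < C := by positivity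
  set ε : ℝ := min (δ / C) (1 / 2) with hεdef
  have hεpos : 0 < ε := lt_min (by positivity) (by norm_num)
  have hεhalf : ε ≤ 1 / 2 := min_le_right _ _
  have hε1 : ε ≤ 1 := by linarith
  have hεδ : C * ε ≤ δ := by
    have h1 : ε ≤ δ / C := min_le_left _ _
    calc C * ε ≤ C * (δ / C) := by nlinarith
    _ = δ := by field_simp
  have hgnn : ∀ u : ℝ, 0 ≤ g u := fun u => st14_mtail_nonneg G u
  have hfnn : ∀ u : ℝ, 0 ≤ f u := fun u => st14_mtail_nonneg μ u
  have hmnn : ∀ u : ℝ, 0 ≤ m u := fun u => st14_mtail_nonneg ν u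
  -- pointwise ε-tail bounds from some point on
  have hfε : ∀ᶠ u in atTop, |f u - c * g u| ≤ ε * g u := by
    filter_upwards [Asymptotics.isLittleO_iff.mp hXt' hεpos] with u hu
    rwa [Real.norm_eq_abs, Real.norm_eq_abs, abs_of_nonneg (hgnn u)] at hu
  have hmε : ∀ᶠ u in atTop, |m u - d * g u| ≤ ε * g u := by
    filter_upwards [Asymptotics.isLittleO_iff.mp hYt' hεpos] with u hu
    rwa [Real.norm_eq_abs, Real.norm_eq_abs, abs_of_nonneg (hgnn u)] at hu
  obtain ⟨s₁, hs₁⟩ := eventually_atTop.mp (hfε.and hmε)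
  set s₀ : ℝ := max s₁ 0 with hs₀def
  have hs₀nn : (0:ℝ) ≤ s₀ := le_max_right _ _
  have hs₀ : ∀ u, s₀ ≤ u → |f u - c * g u| ≤ ε * g u ∧ |m u - d * g u| ≤ ε * g u :=
    fun u hu => hs₁ u (le_trans (le_max_left _ _) hu)
  -- choose the truncation level A
  have hAev : ∀ᶠ A in atTop, (s₀ ≤ A ∧ g A < ε / ((c + 1) * (d + 1))) ∧
      ((μ (Iio (-A))).toReal < ε ∧ (ν (Iio (-A))).toReal < ε) := by
    have e1 : ∀ᶠ A in atTop, g A < ε / ((c + 1) * (d + 1)) :=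
      (st14_mtail_tendsto_zero G).eventually_lt_const (by positivity)
    have e2 : ∀ᶠ A in atTop, (μ (Iio (-A))).toReal < ε :=
      (st14_mtail_Iio_tendsto_zero μ).eventually_lt_const hεpos
    have e3 : ∀ᶠ A in atTop, (ν (Iio (-A))).toReal < ε :=
      (st14_mtail_Iio_tendsto_zero ν).eventually_lt_const hεpos
    filter_upwards [eventually_ge_atTop s₀, e1, e2, e3] with A h1 h2 h3 h4
    exact ⟨⟨h1, h2⟩, h3, h4⟩
  obtain ⟨A, ⟨hAs₀, hgA⟩, hμA, hνA⟩ := hAev.exists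
  have hA0 : (0:ℝ) ≤ A := le_trans hs₀nn hAs₀
  have hcd1 : (1:ℝ) ≤ (c + 1) * (d + 1) := by nlinarith
  have hgA' : g A ≤ ε := le_trans hgA.le (by
    rw [div_le_iff₀ (by positivity)]; nlinarith [hεpos.le])
  have hfAc : f A ≤ (c + 1) * g A := by
    have h1 := abs_le.mp (hs₀ A hAs₀).1
    nlinarith [hgnn A, h1.2]
  have hmAc : m A ≤ (d + 1) * g A := by
    have h1 := abs_le.mp (hs₀ A hAs₀).2
    nlinarith [hgnn A, h1.2]
  have hfA : f A ≤ ε := by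
    have h2 : (c + 1) * g A ≤ (c + 1) * (ε / ((c + 1) * (d + 1))) := by nlinarith [hgA.le]
    have h3 : (c + 1) * (ε / ((c + 1) * (d + 1))) ≤ ε := by
      rw [mul_div_assoc', div_le_iff₀ (by positivity)]
      nlinarith [mul_nonneg (mul_nonneg hεpos.le (by linarith : (0:ℝ) ≤ c + 1)) hd]
    linarith [hfAc]
  have hmA : m A ≤ ε := by
    have h2 : (d + 1) * g A ≤ (d + 1) * (ε / ((c + 1) * (d + 1))) := by nlinarith [hgA.le]
    have h3 : (d + 1) * (ε / ((c + 1) * (d + 1))) ≤ ε := by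
      rw [mul_div_assoc', div_le_iff₀ (by positivity)]
      nlinarith [mul_nonneg (mul_nonneg hεpos.le (by linarith : (0:ℝ) ≤ d + 1)) hc]
    linarith [hmAc]
  -- ENNReal tail domination
  have hμdom : ∀ u : ℝ, s₀ ≤ u → μ (Ioi u) ≤ ENNReal.ofReal (c + 1) * G (Ioi u) := by
    intro u hu
    have h2 : f u ≤ (c + 1) * g u := by
      have h1 := abs_le.mp (hs₀ u hu).1
      nlinarith [hgnn u, h1.2]
    calc μ (Ioi u) = ENNReal.ofReal (f u) := (ENNReal.ofReal_toReal (measure_ne_top μ _)).symm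
    _ ≤ ENNReal.ofReal ((c + 1) * g u) := ENNReal.ofReal_le_ofReal h2
    _ = ENNReal.ofReal (c + 1) * ENNReal.ofReal (g u) := ENNReal.ofReal_mul (by linarith)
    _ = ENNReal.ofReal (c + 1) * G (Ioi u) := by
        rw [hgdef, mtail, ENNReal.ofReal_toReal (measure_ne_top G _)]
  have hνdom : ∀ u : ℝ, s₀ ≤ u → ν (Ioi u) ≤ ENNReal.ofReal (d + 1) * G (Ioi u) := by
    intro u hu
    have h2 : m u ≤ (d + 1) * g u := by
      have h1 := abs_le.mp (hs₀ u hu).2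
      nlinarith [hgnn u, h1.2]
    calc ν (Ioi u) = ENNReal.ofReal (m u) := (ENNReal.ofReal_toReal (measure_ne_top ν _)).symm
    _ ≤ ENNReal.ofReal ((d + 1) * g u) := ENNReal.ofReal_le_ofReal h2
    _ = ENNReal.ofReal (d + 1) * ENNReal.ofReal (g u) := ENNReal.ofReal_mul (by linarith)
    _ = ENNReal.ofReal (d + 1) * G (Ioi u) := by
        rw [hgdef, mtail, ENNReal.ofReal_toReal (measure_ne_top G _)]
  -- eventual facts in y
  have hF3 : ∀ᶠ y in atTop, g (y - A) ≤ (1 + ε) * g y := st14_longtail hGpos hGsub hA0 hεpos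
  have hF4 : ∀ᶠ y in atTop, g y ≤ (1 + ε) * g (y + A) := by
    obtain ⟨N, hN⟩ := eventually_atTop.mp (st14_longtail hGpos hGsub hA0 hεpos)
    refine eventually_atTop.mpr ⟨N, fun y hy => ?_⟩
    have h := hN (y + A) (by linarith)
    rwa [add_sub_cancel_right] at h
  have hF5 : ∀ᶠ y in atTop, mtail (mconv G G) y ≤ (2 + ε) * g y := by
    have h2 : ∀ᶠ y in atTop, mtail (mconv G G) y / g y < 2 + ε :=
      hGsub.2.eventually_lt_const (by linarith)
    filter_upwards [h2] with y hy
    have hgy : 0 < g y := hGsub.1 y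
    calc mtail (mconv G G) y = mtail (mconv G G) y / g y * g y := by field_simp
    _ ≤ (2 + ε) * g y := mul_le_mul_of_nonneg_right hy.le hgy.le
  filter_upwards [hF3, hF4, hF5, eventually_gt_atTop (2 * A + 1), eventually_ge_atTop s₀]
    with y hgyA hgyA' hconv2 hy2A hys₀
  have hgy : 0 < g y := hGsub.1 y
  have hyA1 : s₀ ≤ y - A := by linarith
  have hyA2 : s₀ ≤ y + A := by linarith
  -- the sets
  set Sy : Set (ℝ × ℝ) := {p : ℝ × ℝ | p.1 + p.2 > y} with hSydef
  have hSym : MeasurableSet Sy := measurableSet_lt measurable_const (measurable_fst.add measurable_snd)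
  set T1 : Set (ℝ × ℝ) := Sy ∩ {p | p.2 ≤ A} with hT1def
  set T2 : Set (ℝ × ℝ) := Sy ∩ {p | A < p.2 ∧ p.1 ≤ A} with hT2def
  set T3 : Set (ℝ × ℝ) := Sy ∩ {p | A < p.1 ∧ A < p.2} with hT3def
  have hT1m : MeasurableSet T1 := hSym.inter (measurableSet_le measurable_snd measurable_const)
  have hT2m : MeasurableSet T2 := hSym.inter ((measurableSet_lt measurable_const measurable_snd).inter
    (measurableSet_le measurable_fst measurable_const))
  have hT3m : MeasurableSet T3 := hSym.inter ((measurableSet_lt measurable_const measurable_fst).inter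
    (measurableSet_lt measurable_const measurable_snd))
  have hunion : T1 ∪ (T2 ∪ T3) = Sy := by
    ext p
    simp only [hT1def, hT2def, hT3def, hSydef, mem_union, mem_inter_iff, mem_setOf_eq]
    constructor
    · rintro (h | h | h) <;> exact h.1
    · intro h
      by_cases h2 : p.2 ≤ A
      · exact Or.inl ⟨h, h2⟩
      · push_neg at h2
        by_cases h1 : p.1 ≤ A
        · exact Or.inr (Or.inl ⟨h, h2, h1⟩)
        · push_neg at h1
          exact Or.inr (Or.inr ⟨h, h1, h2⟩)
  -- disjointness and splitting
  have hd1 : Disjoint T1 (T2 ∪ T3) := by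
    rw [Set.disjoint_left]
    rintro p hp hq
    simp only [hT1def, hT2def, hT3def, mem_inter_iff, mem_union, mem_setOf_eq] at hp hq
    rcases hq with hq | hq
    · linarith only [hp.2, hq.2.1]
    · linarith only [hp.2, hq.2.2]
  have hd23 : Disjoint T2 T3 := by
    rw [Set.disjoint_left]
    rintro p hp hq
    simp only [hT2def, hT3def, mem_inter_iff, mem_setOf_eq] at hp hq
    linarith only [hp.2.2, hq.2.1]
  have hsplit : (μ.prod ν) Sy = (μ.prod ν) T1 + (μ.prod ν) T2 + (μ.prod ν) T3 := by
    rw [← hunion, measure_union hd1 (hT2m.union hT3m), measure_union hd23 hT3m, add_assoc]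
  set r1 : ℝ := ((μ.prod ν) T1).toReal with hr1def
  set r2 : ℝ := ((μ.prod ν) T2).toReal with hr2def
  set r3 : ℝ := ((μ.prod ν) T3).toReal with hr3def
  have hPS : (P {ω | X ω + Y ω > y}).toReal = r1 + r2 + r3 := by
    have hpre : {ω | X ω + Y ω > y} = (fun ω => (X ω, Y ω)) ⁻¹' Sy := rfl
    rw [hpre, hkey Sy hSym, hsplit,
      ENNReal.toReal_add (ENNReal.add_ne_top.mpr ⟨measure_ne_top _ _, measure_ne_top _ _⟩)
        (measure_ne_top _ _),
      ENNReal.toReal_add (measure_ne_top _ _) (measure_ne_top _ _)]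
  -- rectangle bounds for T1, T2
  have hr1u : r1 ≤ f (y - A) := by
    have hsub : T1 ⊆ Ioi (y - A) ×ˢ (univ : Set ℝ) := by
      rintro ⟨s, t⟩ hp
      simp only [hT1def, hSydef, mem_inter_iff, mem_setOf_eq] at hp
      exact ⟨mem_Ioi.mpr (by linarith only [hp.1, hp.2]), mem_univ _⟩
    have h := measure_mono (μ := μ.prod ν) hsub
    rw [Measure.prod_prod, measure_univ, mul_one] at h
    exact ENNReal.toReal_mono (measure_ne_top _ _) h
  have hr1l : f (y + A) * (ν (Icc (-A) A)).toReal ≤ r1 := by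
    have hsub : Ioi (y + A) ×ˢ Icc (-A) A ⊆ T1 := by
      rintro ⟨s, t⟩ ⟨hs, ht⟩
      simp only [mem_Ioi] at hs
      simp only [mem_Icc] at ht
      simp only [hT1def, hSydef, mem_inter_iff, mem_setOf_eq]
      exact ⟨by linarith only [hs, ht.1], ht.2⟩
    have h := measure_mono (μ := μ.prod ν) hsub
    rw [Measure.prod_prod] at h
    have h2 := ENNReal.toReal_mono (measure_ne_top _ _) h
    rwa [ENNReal.toReal_mul] at h2
  have hr2u : r2 ≤ m (y - A) := by
    have hsub : T2 ⊆ (univ : Set ℝ) ×ˢ Ioi (y - A) := by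
      rintro ⟨s, t⟩ hp
      simp only [hT2def, hSydef, mem_inter_iff, mem_setOf_eq] at hp
      exact ⟨mem_univ _, mem_Ioi.mpr (by linarith only [hp.1, hp.2.2])⟩
    have h := measure_mono (μ := μ.prod ν) hsub
    rw [Measure.prod_prod, measure_univ, one_mul] at h
    exact ENNReal.toReal_mono (measure_ne_top _ _) h
  have hr2l : (μ (Icc (-A) A)).toReal * m (y + A) ≤ r2 := by
    have hsub : Icc (-A) A ×ˢ Ioi (y + A) ⊆ T2 := by
      rintro ⟨s, t⟩ ⟨hs, ht⟩
      simp only [mem_Icc] at hs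
      simp only [mem_Ioi] at ht
      simp only [hT2def, hSydef, mem_inter_iff, mem_setOf_eq]
      exact ⟨by linarith only [hs.1, ht], by linarith only [ht, hy2A, hA0], hs.2⟩
    have h := measure_mono (μ := μ.prod ν) hsub
    rw [Measure.prod_prod] at h
    have h2 := ENNReal.toReal_mono (measure_ne_top _ _) h
    rwa [ENNReal.toReal_mul] at h2
  -- the middle sets
  set MS : Set (ℝ × ℝ) := Sy ∩ {p | A < p.2 ∧ p.2 ≤ y - A} with hMSdef
  have hMSm : MeasurableSet MS := hSym.inter
    ((measurableSet_lt measurable_const measurable_snd).inter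
      (measurableSet_le measurable_snd measurable_const))
  set MS' : Set (ℝ × ℝ) := Sy ∩ {p | A < p.1 ∧ p.1 ≤ y - A} with hMS'def
  have hMS'm : MeasurableSet MS' := hSym.inter
    ((measurableSet_lt measurable_const measurable_fst).inter
      (measurableSet_le measurable_fst measurable_const))
  have hr3u : r3 ≤ ((μ.prod ν) MS).toReal + f A * m (y - A) := by
    have hsub : T3 ⊆ MS ∪ Ioi A ×ˢ Ioi (y - A) := by
      rintro ⟨s, t⟩ hp
      simp only [hT3def, hSydef, mem_inter_iff, mem_setOf_eq] at hp
      by_cases hts : t ≤ y - A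
      · exact Or.inl ⟨hp.1, hp.2.2, hts⟩
      · push_neg at hts
        exact Or.inr ⟨mem_Ioi.mpr hp.2.1, mem_Ioi.mpr hts⟩
    calc r3 ≤ ((μ.prod ν) (MS ∪ Ioi A ×ˢ Ioi (y - A))).toReal :=
          ENNReal.toReal_mono (measure_ne_top _ _) (measure_mono hsub)
    _ ≤ ((μ.prod ν) MS).toReal + ((μ.prod ν) (Ioi A ×ˢ Ioi (y - A))).toReal :=
          st14_toReal_union_le _ _ _
    _ = ((μ.prod ν) MS).toReal + f A * m (y - A) := by
          rw [Measure.prod_prod, ENNReal.toReal_mul]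
          rfl
  -- step 1 : dominate μ by (c+1) G on the middle strip
  have hstep1 : (μ.prod ν) MS ≤ ENNReal.ofReal (c + 1) * (G.prod ν) MS := by
    rw [Measure.prod_apply_symm hMSm, Measure.prod_apply_symm hMSm,
      ← lintegral_const_mul' _ _ ENNReal.ofReal_ne_top]
    refine lintegral_mono fun t => ?_
    by_cases ht : A < t ∧ t ≤ y - A
    · have hslice : ((fun x => (x, t)) ⁻¹' MS) = Ioi (y - t) := by
        ext s
        simp only [hMSdef, hSydef, mem_preimage, mem_inter_iff, mem_setOf_eq, mem_Ioi]
        constructor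
        · rintro ⟨h1, _⟩; linarith only [h1]
        · intro h; exact ⟨by linarith only [h], ht⟩
      rw [hslice]
      exact hμdom (y - t) (by linarith only [ht.2, hAs₀])
    · have hslice : ((fun x => (x, t)) ⁻¹' MS) = ∅ := by
        ext s
        simp only [hMSdef, mem_preimage, mem_inter_iff, mem_setOf_eq, mem_empty_iff_false,
          iff_false, not_and]
        exact fun _ h2 h3 => ht ⟨h2, h3⟩
      rw [hslice]
      simp
  -- step 2 : swap the strip to the first coordinate
  have hstep2 : (G.prod ν) MS ≤ (G.prod ν) MS' + G (Ioi (y - A)) * ν (Ioi A) := by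
    have hsub : MS ⊆ MS' ∪ Ioi (y - A) ×ˢ Ioi A := by
      rintro ⟨s, t⟩ hp
      simp only [hMSdef, hSydef, mem_inter_iff, mem_setOf_eq] at hp
      by_cases hs : s ≤ y - A
      · refine Or.inl ?_
        simp only [hMS'def, hSydef, mem_inter_iff, mem_setOf_eq]
        exact ⟨hp.1, by linarith only [hp.1, hp.2.2], hs⟩
      · push_neg at hs
        exact Or.inr ⟨mem_Ioi.mpr hs, mem_Ioi.mpr hp.2.1⟩
    calc (G.prod ν) MS ≤ (G.prod ν) (MS' ∪ Ioi (y - A) ×ˢ Ioi A) := measure_mono hsub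
    _ ≤ (G.prod ν) MS' + (G.prod ν) (Ioi (y - A) ×ˢ Ioi A) := measure_union_le _ _
    _ = (G.prod ν) MS' + G (Ioi (y - A)) * ν (Ioi A) := by rw [Measure.prod_prod]
  -- step 3 : dominate ν by (d+1) G on the swapped strip
  have hstep3 : (G.prod ν) MS' ≤ ENNReal.ofReal (d + 1) * (G.prod G) MS' := by
    rw [Measure.prod_apply hMS'm, Measure.prod_apply hMS'm,
      ← lintegral_const_mul' _ _ ENNReal.ofReal_ne_top]
    refine lintegral_mono fun s => ?_
    by_cases hs : A < s ∧ s ≤ y - A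
    · have hslice : (Prod.mk s ⁻¹' MS') = Ioi (y - s) := by
        ext t
        simp only [hMS'def, hSydef, mem_preimage, mem_inter_iff, mem_setOf_eq, mem_Ioi]
        constructor
        · rintro ⟨h1, _⟩; linarith only [h1]
        · intro h; exact ⟨by linarith only [h], hs⟩
      rw [hslice]
      exact hνdom (y - s) (by linarith only [hs.2, hAs₀])
    · have hslice : (Prod.mk s ⁻¹' MS') = ∅ := by
        ext t
        simp only [hMS'def, mem_preimage, mem_inter_iff, mem_setOf_eq, mem_empty_iff_false,
          iff_false, not_and]
        exact fun _ h2 h3 => hs ⟨h2, h3⟩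
      rw [hslice]
      simp
  -- step 4 : subexponentiality kills the middle strip of G * G
  have hMG3 : ((G.prod G) MS').toReal ≤ 3 * ε * g y := by
    set D1 : Set (ℝ × ℝ) := Sy ∩ {p | p.1 ≤ A} with hD1def
    set D2 : Set (ℝ × ℝ) := Sy ∩ {p | A < p.1 ∧ p.2 ≤ A} with hD2def
    have hD1m : MeasurableSet D1 := hSym.inter (measurableSet_le measurable_fst measurable_const)
    have hD2m : MeasurableSet D2 := hSym.inter
      ((measurableSet_lt measurable_const measurable_fst).inter
        (measurableSet_le measurable_snd measurable_const))
    have hd12 : Disjoint D1 D2 := by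
      rw [Set.disjoint_left]
      rintro p hp hq
      simp only [hD1def, hD2def, mem_inter_iff, mem_setOf_eq] at hp hq
      linarith only [hp.2, hq.2.1]
    have hd12' : Disjoint (D1 ∪ D2) MS' := by
      rw [Set.disjoint_left]
      rintro p (hp | hp) hq <;>
        simp only [hD1def, hD2def, hMS'def, hSydef, mem_inter_iff, mem_setOf_eq] at hp hq
      · linarith only [hp.2, hq.2.1]
      · linarith only [hp.2.2, hq.1, hq.2.2]
    have hsub : D1 ∪ D2 ∪ MS' ⊆ Sy := by
      rintro p ((h | h) | h) <;> exact h.1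
    have e1 : (G.prod G) (D1 ∪ D2 ∪ MS') =
        (G.prod G) D1 + (G.prod G) D2 + (G.prod G) MS' := by
      rw [measure_union hd12' hMS'm, measure_union hd12 hD2m]
    have hdisj : (G.prod G) D1 + (G.prod G) D2 + (G.prod G) MS' ≤ (G.prod G) Sy :=
      e1 ▸ measure_mono hsub
    have hD1l : G (Icc (0:ℝ) A) * G (Ioi y) ≤ (G.prod G) D1 := by
      have hsub2 : Icc (0:ℝ) A ×ˢ Ioi y ⊆ D1 := by
        rintro ⟨s, t⟩ ⟨hs, ht⟩
        simp only [mem_Icc] at hs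
        simp only [mem_Ioi] at ht
        simp only [hD1def, hSydef, mem_inter_iff, mem_setOf_eq]
        exact ⟨by linarith only [hs.1, ht], hs.2⟩
      have h := measure_mono (μ := G.prod G) hsub2
      rwa [Measure.prod_prod] at h
    have hD2l : G (Ioi y) * G (Icc (0:ℝ) A) ≤ (G.prod G) D2 := by
      have hsub2 : Ioi y ×ˢ Icc (0:ℝ) A ⊆ D2 := by
        rintro ⟨s, t⟩ ⟨hs, ht⟩
        simp only [mem_Ioi] at hs
        simp only [mem_Icc] at ht
        simp only [hD2def, hSydef, mem_inter_iff, mem_setOf_eq]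
        exact ⟨by linarith only [hs, ht.1], by linarith only [hs, hy2A, hA0], ht.2⟩
      have h := measure_mono (μ := G.prod G) hsub2
      rwa [Measure.prod_prod] at h
    have hconvSy : ((G.prod G) Sy).toReal = mtail (mconv G G) y := by
      rw [hSydef]
      exact (st14_mtail_mconv G G y).symm
    have hIcc0 : 1 - g A ≤ (G (Icc (0:ℝ) A)).toReal := st14_toReal_Icc0_ge hGpos A
    have hDsum : ((G.prod G) D1).toReal + ((G.prod G) D2).toReal + ((G.prod G) MS').toReal
        ≤ (2 + ε) * g y := by
      have h := ENNReal.toReal_mono (measure_ne_top _ _) hdisj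
      rw [ENNReal.toReal_add (ENNReal.add_ne_top.mpr ⟨measure_ne_top _ _, measure_ne_top _ _⟩)
        (measure_ne_top _ _), ENNReal.toReal_add (measure_ne_top _ _) (measure_ne_top _ _)] at h
      calc ((G.prod G) D1).toReal + ((G.prod G) D2).toReal + ((G.prod G) MS').toReal
          ≤ ((G.prod G) Sy).toReal := h
      _ = mtail (mconv G G) y := hconvSy
      _ ≤ (2 + ε) * g y := hconv2
    have hD1r : (G (Icc (0:ℝ) A)).toReal * g y ≤ ((G.prod G) D1).toReal := by
      have h := ENNReal.toReal_mono (measure_ne_top _ _) hD1l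
      rwa [ENNReal.toReal_mul] at h
    have hD2r : g y * (G (Icc (0:ℝ) A)).toReal ≤ ((G.prod G) D2).toReal := by
      have h := ENNReal.toReal_mono (measure_ne_top _ _) hD2l
      rwa [ENNReal.toReal_mul] at h
    have h5 : (1 - ε) * g y ≤ (G (Icc (0:ℝ) A)).toReal * g y :=
      mul_le_mul_of_nonneg_right (by linarith only [hIcc0, hgA']) hgy.le
    nlinarith only [hDsum, hD1r, hD2r, h5]
  -- convert steps to reals
  have hstep3r : ((G.prod ν) MS').toReal ≤ (d + 1) * ((G.prod G) MS').toReal := by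
    have h := ENNReal.toReal_mono
      (ENNReal.mul_ne_top ENNReal.ofReal_ne_top (measure_ne_top _ _)) hstep3
    rwa [ENNReal.toReal_mul, ENNReal.toReal_ofReal (by linarith only [hd])] at h
  have hstep2r : ((G.prod ν) MS).toReal ≤ ((G.prod ν) MS').toReal + g (y - A) * m A := by
    have h := ENNReal.toReal_mono (ENNReal.add_ne_top.mpr ⟨measure_ne_top _ _,
      ENNReal.mul_ne_top (measure_ne_top _ _) (measure_ne_top _ _)⟩) hstep2
    rwa [ENNReal.toReal_add (measure_ne_top _ _)
      (ENNReal.mul_ne_top (measure_ne_top _ _) (measure_ne_top _ _)), ENNReal.toReal_mul] at h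
  have hstep1r : ((μ.prod ν) MS).toReal ≤ (c + 1) * ((G.prod ν) MS).toReal := by
    have h := ENNReal.toReal_mono
      (ENNReal.mul_ne_top ENNReal.ofReal_ne_top (measure_ne_top _ _)) hstep1
    rwa [ENNReal.toReal_mul, ENNReal.toReal_ofReal (by linarith only [hc])] at h
  -- scalar tail estimates
  have hfyAm := abs_le.mp (hs₀ (y - A) hyA1).1
  have hmyAm := abs_le.mp (hs₀ (y - A) hyA1).2
  have hfyAp := abs_le.mp (hs₀ (y + A) hyA2).1
  have hmyAp := abs_le.mp (hs₀ (y + A) hyA2).2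
  have hνIcc : 1 - 2 * ε ≤ (ν (Icc (-A) A)).toReal := by
    have h := st14_toReal_Icc_ge (μ := ν) A
    have hmm : (ν (Ioi A)).toReal = m A := rfl
    linarith only [h, hmm ▸ h, hνA.le, hmA, h.trans_eq' (by rw [hmm])]
  have hμIcc : 1 - 2 * ε ≤ (μ (Icc (-A) A)).toReal := by
    have h := st14_toReal_Icc_ge (μ := μ) A
    have hmm : (μ (Ioi A)).toReal = f A := rfl
    linarith only [h, hmm ▸ h, hμA.le, hfA, h.trans_eq' (by rw [hmm])]
  -- upper bound for r1
  have Hu1 : r1 ≤ c * g y + 3 * (c + 1) * ε * g y := by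
    have h1 : f (y - A) ≤ (c + ε) * g (y - A) := by linarith only [hfyAm.2]
    have h2 : (c + ε) * g (y - A) ≤ (c + ε) * ((1 + ε) * g y) :=
      mul_le_mul_of_nonneg_left hgyA (by linarith only [hc, hεpos])
    have hco : (c + ε) * (1 + ε) ≤ c + 3 * (c + 1) * ε := by
      nlinarith only [hc, hεpos.le, hε1, mul_nonneg hc hεpos.le,
        mul_nonneg (by linarith only [hε1] : (0:ℝ) ≤ 1 - ε) hεpos.le]
    linarith only [hr1u, h1, h2, mul_le_mul_of_nonneg_right hco hgy.le]
  have Hu2 : r2 ≤ d * g y + 3 * (d + 1) * ε * g y := by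
    have h1 : m (y - A) ≤ (d + ε) * g (y - A) := by linarith only [hmyAm.2]
    have h2 : (d + ε) * g (y - A) ≤ (d + ε) * ((1 + ε) * g y) :=
      mul_le_mul_of_nonneg_left hgyA (by linarith only [hd, hεpos])
    have hco : (d + ε) * (1 + ε) ≤ d + 3 * (d + 1) * ε := by
      nlinarith only [hd, hεpos.le, hε1, mul_nonneg hd hεpos.le,
        mul_nonneg (by linarith only [hε1] : (0:ℝ) ≤ 1 - ε) hεpos.le]
    linarith only [hr2u, h1, h2, mul_le_mul_of_nonneg_right hco hgy.le]
  -- upper bound for r3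
  have Hu3 : r3 ≤ 14 * (c + 1) * (d + 1) * ε * g y := by
    have hm1 : m (y - A) ≤ (d + ε) * g (y - A) := by linarith only [hmyAm.2]
    have hm2' : (d + ε) * g (y - A) ≤ (d + ε) * ((1 + ε) * g y) :=
      mul_le_mul_of_nonneg_left hgyA (by linarith only [hd, hεpos])
    have hco : (d + ε) * (1 + ε) ≤ 2 * (d + 1) := by
      nlinarith only [hd, hεpos.le, hε1, mul_nonneg hd hεpos.le,
        mul_nonneg (by linarith only [hε1] : (0:ℝ) ≤ 1 - ε) hεpos.le]
    have hm2 : m (y - A) ≤ 2 * (d + 1) * g y := by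
      linarith only [hm1, hm2', mul_le_mul_of_nonneg_right hco hgy.le]
    have h61 : g (y - A) * m A ≤ ((1 + ε) * g y) * ε :=
      mul_le_mul hgyA hmA (hmnn A) (mul_nonneg (by linarith only [hεpos]) hgy.le)
    have h6 : g (y - A) * m A ≤ 2 * g y * ε := by
      linarith only [h61,
        mul_nonneg (mul_nonneg (by linarith only [hε1] : (0:ℝ) ≤ 1 - ε) hεpos.le) hgy.le]
    have h7 := mul_le_mul_of_nonneg_left hMG3 (by linarith only [hd] : (0:ℝ) ≤ d + 1)
    have hMν : ((G.prod ν) MS).toReal ≤ 3 * (d + 1) * ε * g y + 2 * ε * g y := by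
      linarith only [hstep2r, hstep3r, h6, h7]
    have h8 := mul_le_mul_of_nonneg_left hMν (by linarith only [hc] : (0:ℝ) ≤ c + 1)
    have hMr : ((μ.prod ν) MS).toReal ≤ (c + 1) * (3 * (d + 1) * ε * g y + 2 * ε * g y) := by
      linarith only [hstep1r, h8]
    have hfAm : f A * m (y - A) ≤ ε * (2 * (d + 1) * g y) :=
      mul_le_mul hfA hm2 (hmnn _) hεpos.le
    linarith only [hr3u, hMr, hfAm, mul_nonneg (mul_nonneg hεpos.le hgy.le) hc,
      mul_nonneg (mul_nonneg hεpos.le hgy.le) hd,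
      mul_nonneg (mul_nonneg (mul_nonneg hεpos.le hgy.le) hc) hd,
      mul_nonneg hεpos.le hgy.le]
  -- lower bound for r1
  have hr1nn : (0:ℝ) ≤ r1 := by rw [hr1def]; exact ENNReal.toReal_nonneg
  have hr2nn : (0:ℝ) ≤ r2 := by rw [hr2def]; exact ENNReal.toReal_nonneg
  have Hl3 : (0:ℝ) ≤ r3 := by rw [hr3def]; exact ENNReal.toReal_nonneg
  have s2 : (1 - ε) * g y ≤ g (y + A) := by
    have p1 : (0:ℝ) ≤ (1 - ε) * ((1 + ε) * g (y + A) - g y) :=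
      mul_nonneg (by linarith only [hε1]) (by linarith only [hgyA'])
    nlinarith only [p1, mul_nonneg (mul_nonneg hεpos.le hεpos.le) (hgnn (y + A))]
  have Hl1 : c * g y - 4 * (c + 1) * ε * g y ≤ r1 := by
    rcases le_or_gt ε c with hcase | hcase
    · have b1 : (c - ε) * g (y + A) ≤ f (y + A) := by linarith only [hfyAp.1]
      have s1 : ((c - ε) * g (y + A)) * (1 - 2 * ε) ≤ f (y + A) * (ν (Icc (-A) A)).toReal :=
        mul_le_mul b1 hνIcc (by linarith only [hεhalf]) (hfnn _)
      have s3' : (c - ε) * ((1 - ε) * g y) ≤ (c - ε) * g (y + A) :=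
        mul_le_mul_of_nonneg_left s2 (by linarith only [hcase])
      have s3 := mul_le_mul_of_nonneg_right s3' (by linarith only [hεhalf] : (0:ℝ) ≤ 1 - 2 * ε)
      have s4 : c - 4 * (c + 1) * ε ≤ (c - ε) * (1 - ε) * (1 - 2 * ε) := by
        nlinarith only [hc, hεpos.le, hεhalf, mul_nonneg hc hεpos.le,
          mul_nonneg (mul_nonneg hc hεpos.le) hεpos.le, sq_nonneg ε,
          mul_nonneg (mul_nonneg hεpos.le hεpos.le)
            (by linarith only [hεhalf] : (0:ℝ) ≤ 1 - ε)]
      have s5 := mul_le_mul_of_nonneg_right s4 hgy.le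
      linarith only [hr1l, s1, s3, s5]
    · have hneg : c - 4 * (c + 1) * ε ≤ 0 := by
        nlinarith only [hcase, hεpos, hc, mul_nonneg hc hεpos.le]
      have := mul_nonneg (by linarith only [hneg] : (0:ℝ) ≤ -(c - 4 * (c + 1) * ε)) hgy.le
      linarith only [this, hr1nn]
  have Hl2 : d * g y - 4 * (d + 1) * ε * g y ≤ r2 := by
    rcases le_or_gt ε d with hcase | hcase
    · have b1 : (d - ε) * g (y + A) ≤ m (y + A) := by linarith only [hmyAp.1]
      have s1 : (1 - 2 * ε) * ((d - ε) * g (y + A)) ≤ (μ (Icc (-A) A)).toReal * m (y + A) :=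
        mul_le_mul hμIcc b1
          (mul_nonneg (by linarith only [hcase]) (hgnn _))
          (ENNReal.toReal_nonneg)
      have s3' : (d - ε) * ((1 - ε) * g y) ≤ (d - ε) * g (y + A) :=
        mul_le_mul_of_nonneg_left s2 (by linarith only [hcase])
      have s3 := mul_le_mul_of_nonneg_left s3' (by linarith only [hεhalf] : (0:ℝ) ≤ 1 - 2 * ε)
      have s4 : d - 4 * (d + 1) * ε ≤ (d - ε) * (1 - ε) * (1 - 2 * ε) := by
        nlinarith only [hd, hεpos.le, hεhalf, mul_nonneg hd hεpos.le,
          mul_nonneg (mul_nonneg hd hεpos.le) hεpos.le, sq_nonneg ε,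
          mul_nonneg (mul_nonneg hεpos.le hεpos.le)
            (by linarith only [hεhalf] : (0:ℝ) ≤ 1 - ε)]
      have s5 := mul_le_mul_of_nonneg_right s4 hgy.le
      linarith only [hr2l, s1, s3, s5]
    · have hneg : d - 4 * (d + 1) * ε ≤ 0 := by
        nlinarith only [hcase, hεpos, hd, mul_nonneg hd hεpos.le]
      have := mul_nonneg (by linarith only [hneg] : (0:ℝ) ≤ -(d - 4 * (d + 1) * ε)) hgy.le
      linarith only [this, hr2nn]
  -- assemble
  rw [Real.norm_eq_abs, Real.norm_eq_abs, abs_of_nonneg (hgnn y), hPS, abs_le]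
  have hk1 : (3 * (c + 1) + 3 * (d + 1) + 14 * (c + 1) * (d + 1)) * ε ≤ δ := by
    have hKC : (3 * (c + 1) + 3 * (d + 1) + 14 * (c + 1) * (d + 1)) ≤ C := by
      rw [hCdef]
      nlinarith only [mul_nonneg hc hd, hc, hd]
    have h9 := mul_le_mul_of_nonneg_right hKC hεpos.le
    linarith only [h9, hεδ]
  have hk2 : (4 * (c + 1) + 4 * (d + 1)) * ε ≤ δ := by
    have hKC : (4 * (c + 1) + 4 * (d + 1)) ≤ C := by
      rw [hCdef]
      nlinarith only [mul_nonneg hc hd, hc, hd]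
    have h9 := mul_le_mul_of_nonneg_right hKC hεpos.le
    linarith only [h9, hεδ]
  constructor
  · linarith only [Hl1, Hl2, Hl3, mul_le_mul_of_nonneg_right hk2 hgy.le]
  · linarith only [Hu1, Hu2, Hu3, mul_le_mul_of_nonneg_right hk1 hgy.le]

/-- **Property 5.**  If `ξ₁, …, ξ_n` are mutually independent and `P(ξ_i > y) ~ c_i Ḡ(y)`
for a subexponential distribution `G` (with `c_i = 0` read as `o(Ḡ)`), then
`P(ξ₁ + … + ξ_n > y) ~ (c₁ + … + c_n) Ḡ(y)` as `y → ∞`. -/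
theorem statement14
    {Ω : Type*} [MeasurableSpace Ω] (P : Measure Ω) [IsProbabilityMeasure P]
    (n : ℕ) (ξ : Fin n → Ω → ℝ) (hξmeas : ∀ i, Measurable (ξ i))
    (hindep : iIndepFun ξ P)
    (G : Measure ℝ) [IsProbabilityMeasure G] (hGpos : G (Set.Iio 0) = 0)
    (hGsub : Subexp G)
    (c : Fin n → ℝ) (hc : ∀ i, 0 ≤ c i)
    (htail : ∀ i, (fun y => (P {ω | ξ i ω > y}).toReal - c i * mtail G y)
      =o[atTop] fun y => mtail G y) :
    (fun y => (P {ω | (∑ i, ξ i ω) > y}).toReal - (∑ i, c i) * mtail G y)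
      =o[atTop] fun y => mtail G y := by
  classical
  have key : ∀ s : Finset (Fin n),
      (fun y => (P {ω | (∑ i ∈ s, ξ i ω) > y}).toReal - (∑ i ∈ s, c i) * mtail G y)
        =o[atTop] fun y => mtail G y := by
    intro s
    induction s using Finset.induction_on with
    | empty =>
      have hzero : (fun y => (P {ω | (∑ i ∈ (∅ : Finset (Fin n)), ξ i ω) > y}).toReal
          - (∑ i ∈ (∅ : Finset (Fin n)), c i) * mtail G y) =ᶠ[atTop] (fun _ => (0:ℝ)) := by
        filter_upwards [eventually_ge_atTop (0:ℝ)] with y hy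
        have hset : {ω : Ω | (∑ i ∈ (∅ : Finset (Fin n)), ξ i ω) > y} = ∅ := by
          ext ω
          simp only [Finset.sum_empty, mem_setOf_eq, mem_empty_iff_false, iff_false, gt_iff_lt,
            not_lt]
          exact hy
        rw [hset, measure_empty]
        simp
      exact hzero.trans_isLittleO (Asymptotics.isLittleO_zero _ _)
    | @insert j s hj ih =>
      have hYmeas : Measurable (fun ω => ∑ i ∈ s, ξ i ω) :=
        Finset.measurable_sum s (fun i _ => hξmeas i)
      have hindepXY : IndepFun (ξ j) (fun ω => ∑ i ∈ s, ξ i ω) P := by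
        have h := (hindep.indepFun_finsetSum_of_notMem hξmeas hj).symm
        have he : (∑ i ∈ s, ξ i) = fun ω => ∑ i ∈ s, ξ i ω := by
          funext ω
          simp [Finset.sum_apply]
        rwa [he] at h
      have hres := st14_twovar P (hξmeas j) hYmeas hindepXY hGpos hGsub (hc j)
        (Finset.sum_nonneg fun i _ => hc i) (htail j) ih
      simp only [Finset.sum_insert hj]
      exact hres
  exact key Finset.univ
end
end
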